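/- Let ω > 0 be a real number and n ≥ 1 an integer. Then for every z ∈ ℂ, (ω+n)·(d/dz)S_n^ω(z) = n z·(d/dz)S_{n−1}^ω(z) + n(1+ω)·S_{n−1}^ω(z). -/

import Mathlib

/-!
Write `S_n^ω(z) = Σ_ℓ c_{n,ℓ} z^{n-ℓ}`. Since `z · (z^k)' = k z^k`, both sides are sums over
`z^{n-1-ℓ}`, and comparing coefficients reduces the recurrence to
`binom(n,ℓ) (n-ℓ) = n binom(n-1,ℓ)` together with the Pochhammer shift
`(a)_ℓ (a+ℓ) = a (a+1)_ℓ` at `a = -n-ω`; for `ω > -1` none of the denominators vanish.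
-/

open Finset Polynomial

/-- The monic skyburst polynomial
`S_n^ω(z) = Σ_{ℓ=0}^n binom(n,ℓ) · (−ω)_ℓ/(−n−ω)_ℓ · z^{n−ℓ}`,
where `(a)_ℓ` is the Pochhammer (rising factorial) symbol. -/
noncomputable def skyburst (n : ℕ) (ω : ℝ) (z : ℂ) : ℂ :=
  ∑ ℓ ∈ Finset.range (n + 1),
    (n.choose ℓ : ℂ) *
      ((ascPochhammer ℂ ℓ).eval (-(ω : ℂ)) / (ascPochhammer ℂ ℓ).eval (-(n : ℂ) - (ω : ℂ))) *
      z ^ (n - ℓ)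

lemma ascPochhammer_eval_mul_add_natCast {S : Type*} [CommSemiring S] (ℓ : ℕ) (a : S) :
    (ascPochhammer S ℓ).eval a * (a + ℓ) = a * (ascPochhammer S ℓ).eval (a + 1) := by
  rw [← ascPochhammer_succ_eval, ascPochhammer_succ_left]
  simp

lemma ascPochhammer_eval_neg_natCast_sub_ne_zero {ω : ℝ} (hω : -1 < ω) {n ℓ : ℕ} (hℓ : ℓ ≤ n) :
    (ascPochhammer ℂ ℓ).eval (-(n : ℂ) - ω) ≠ 0 := by
  rw [Ne, ascPochhammer_eval_eq_zero_iff]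
  rintro ⟨k, hk, hkω⟩
  have hre : (k : ℝ) = ω + n := by simpa using congrArg Complex.re hkω
  have : (k : ℝ) + 1 ≤ n := by exact_mod_cast hk.trans_le hℓ
  linarith

section PowerSums

variable {𝕜 : Type*} [NontriviallyNormedField 𝕜]

lemma deriv_sum_mul_pow_sub (c : ℕ → 𝕜) (n : ℕ) (z : 𝕜) :
    deriv (fun z => ∑ ℓ ∈ range (n + 1), c ℓ * z ^ (n - ℓ)) z =
      ∑ ℓ ∈ range (n + 1), c ℓ * ((n - ℓ : ℕ) * z ^ (n - ℓ - 1)) := by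
  rw [deriv_fun_sum fun ℓ _ => (differentiableAt_pow _).const_mul _]
  refine sum_congr rfl fun ℓ _ => ?_
  rw [deriv_const_mul _ (differentiableAt_pow _), deriv_pow_field]

lemma deriv_sum_mul_pow_sub_succ (c : ℕ → 𝕜) (n : ℕ) (z : 𝕜) :
    deriv (fun z => ∑ ℓ ∈ range (n + 1 + 1), c ℓ * z ^ (n + 1 - ℓ)) z =
      ∑ ℓ ∈ range (n + 1), c ℓ * ((n + 1 - ℓ : ℕ) * z ^ (n - ℓ)) := by
  rw [deriv_sum_mul_pow_sub, sum_range_succ, Nat.sub_self, Nat.cast_zero, zero_mul, mul_zero,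
    add_zero]
  refine sum_congr rfl fun ℓ hℓ => ?_
  rw [show n + 1 - ℓ - 1 = n - ℓ by have := mem_range.mp hℓ; omega]

lemma mul_natCast_mul_pow_sub_one (z : 𝕜) (k : ℕ) : z * (k * z ^ (k - 1)) = k * z ^ k := by
  cases k with
  | zero => simp
  | succ k => rw [Nat.add_sub_cancel, pow_succ]; ring

lemma mul_deriv_sum_mul_pow_sub (c : ℕ → 𝕜) (n : ℕ) (z : 𝕜) :
    z * deriv (fun z => ∑ ℓ ∈ range (n + 1), c ℓ * z ^ (n - ℓ)) z =
      ∑ ℓ ∈ range (n + 1), c ℓ * ((n - ℓ : ℕ) * z ^ (n - ℓ)) := by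
  rw [deriv_sum_mul_pow_sub, mul_sum]
  exact sum_congr rfl fun ℓ _ => by rw [mul_left_comm, mul_natCast_mul_pow_sub_one]

end PowerSums

noncomputable def skyburstCoeff (n : ℕ) (ω : ℂ) (ℓ : ℕ) : ℂ :=
  n.choose ℓ * ((ascPochhammer ℂ ℓ).eval (-ω) / (ascPochhammer ℂ ℓ).eval (-(n : ℂ) - ω))

lemma skyburst_eq_sum (n : ℕ) (ω : ℝ) :
    skyburst n ω = fun z => ∑ ℓ ∈ range (n + 1), skyburstCoeff n ω ℓ * z ^ (n - ℓ) :=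
  rfl

lemma skyburstCoeff_succ {ω : ℂ} {m ℓ : ℕ} (hℓ : ℓ ≤ m)
    (hsucc : (ascPochhammer ℂ ℓ).eval (-((m + 1 : ℕ) : ℂ) - ω) ≠ 0)
    (hm : (ascPochhammer ℂ ℓ).eval (-(m : ℂ) - ω) ≠ 0) :
    (ω + (m + 1 : ℕ)) * (skyburstCoeff (m + 1) ω ℓ * (m + 1 - ℓ : ℕ)) =
      (m + 1 : ℕ) * (skyburstCoeff m ω ℓ * ((m - ℓ : ℕ) + 1 + ω)) := by
  have hshift := ascPochhammer_eval_mul_add_natCast ℓ (-((m + 1 : ℕ) : ℂ) - ω)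
  have hchoose : ((m.choose ℓ * (m + 1) : ℕ) : ℂ) = ((m + 1).choose ℓ * (m + 1 - ℓ) : ℕ) :=
    congrArg _ (Nat.choose_mul_succ_eq m ℓ)
  unfold skyburstCoeff
  push_cast [Nat.cast_sub hℓ, Nat.cast_sub (hℓ.trans m.le_succ)] at hshift hchoose hsucc ⊢
  rw [show -((m : ℂ) + 1) - ω + 1 = -(m : ℂ) - ω by ring] at hshift
  field_simp
  linear_combination (m + 1 : ℂ) * (ascPochhammer ℂ ℓ).eval (-ω) * m.choose ℓ * hshift -
    (ω + m + 1) * (ascPochhammer ℂ ℓ).eval (-ω) * (ascPochhammer ℂ ℓ).eval (-(m : ℂ) - ω) * hchoose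

theorem skyburst_differential_recurrence (ω : ℝ) (hω : 0 < ω) (n : ℕ) (hn : 1 ≤ n) (z : ℂ) :
    ((ω : ℂ) + (n : ℂ)) * deriv (skyburst n ω) z =
      (n : ℂ) * z * deriv (skyburst (n - 1) ω) z +
        (n : ℂ) * (1 + (ω : ℂ)) * skyburst (n - 1) ω z := by
  obtain ⟨m, rfl⟩ := Nat.exists_eq_add_of_le' hn
  rw [Nat.add_sub_cancel, mul_assoc _ z, skyburst_eq_sum, skyburst_eq_sum,
    deriv_sum_mul_pow_sub_succ, mul_deriv_sum_mul_pow_sub, mul_sum, mul_sum, mul_sum,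
    ← sum_add_distrib]
  refine sum_congr rfl fun ℓ hℓ => ?_
  have hℓ : ℓ ≤ m := Nat.lt_succ_iff.mp (mem_range.mp hℓ)
  have hω' : -1 < ω := by linarith
  linear_combination z ^ (m - ℓ) * skyburstCoeff_succ hℓ
    (ascPochhammer_eval_neg_natCast_sub_ne_zero hω' (hℓ.trans m.le_succ))
    (ascPochhammer_eval_neg_natCast_sub_ne_zero hω' hℓ)
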